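/- Let d ≥ 1 and k ≥ d + 1 be integers and let G be a d-degenerate graph. Then any two k-colorings of G are Kempe equivalent, i.e., each can be transformed into the other by a finite sequence of Kempe changes. -/

import Mathlib

open SimpleGraph

/-- A proper coloring of `G` with colors in `C`. -/
def IsProperColoring {V C : Type*} (G : SimpleGraph V) (α : V → C) : Prop :=
  ∀ ⦃u v : V⦄, G.Adj u v → α u ≠ α v

/-- `u` lies in the Kempe chain of `v` for the colors `a`, `b`, computed in the
subgraph of `G` induced by the vertex set `S`. -/
def InKempeChainOn {V C : Type*} (G : SimpleGraph V) (S : Set V) (α : V → C)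
    (a b : C) (v u : V) : Prop :=
  Relation.ReflTransGen
    (fun x y => G.Adj x y ∧ x ∈ S ∧ y ∈ S ∧ (α x = a ∨ α x = b) ∧ (α y = a ∨ α y = b)) v u

/-- `u` lies in the Kempe chain of `v` for the colors `a`, `b` in `G`. -/
def InKempeChain {V C : Type*} (G : SimpleGraph V) (α : V → C) (a b : C) (v u : V) : Prop :=
  InKempeChainOn G Set.univ α a b v u

/-- `β` is obtained from `α` by performing a single Kempe change: the colors `a` and `b`
are swapped on the Kempe chain containing `v`. -/
def KempeStep {V C : Type*} [DecidableEq C] (G : SimpleGraph V) (α β : V → C) : Prop :=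
  ∃ (a b : C) (v : V), (α v = a ∨ α v = b) ∧
    (∀ u, InKempeChain G α a b v u → β u = Equiv.swap a b (α u)) ∧
    (∀ u, ¬InKempeChain G α a b v u → β u = α u)

/-- `α` and `β` are Kempe equivalent up to `N` Kempe changes, all intermediate
colorings satisfying the predicate `P`. -/
def KempeEquivIn {V C : Type*} [DecidableEq C] (G : SimpleGraph V) (P : (V → C) → Prop)
    (N : ℕ) (α β : V → C) : Prop :=
  ∃ (m : ℕ) (f : ℕ → V → C), m ≤ N ∧ f 0 = α ∧ f m = β ∧
    (∀ i ≤ m, P (f i)) ∧ ∀ i < m, KempeStep G (f i) (f (i + 1))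


/-!
Induct on a set `S` of vertices that Kempe changes are allowed to touch, removing a vertex
`v ∈ S` with at most `d` neighbours in `S`. A Kempe change on `S \ {v}` is simulated on `S`:
if `v` lies off the corresponding chain, the same swap works. Otherwise, if some colour other
than the two swapped ones is missing around `v`, first recolour `v` with it. If none is missing,
the `k - 1 ≥ d` colours different from that of `v` all appear on its at most `d` neighbours,
so they appear exactly once each; then `v` is a leaf of its chain and the chain on `S` is the
chain on `S \ {v}` together with `v`. Finally `v` itself is recoloured by a singleton chain.
-/

open Set Function

theorem Relation.ReflTransGen.exists_seq {α : Type*} {r : α → α → Prop} {a b : α}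
    (h : Relation.ReflTransGen r a b) :
    ∃ (m : ℕ) (f : ℕ → α), f 0 = a ∧ f m = b ∧ ∀ i < m, r (f i) (f (i + 1)) := by
  induction h with
  | refl => exact ⟨0, fun _ => a, rfl, rfl, by simp⟩
  | @tail b c _ hbc ih =>
    obtain ⟨m, f, h0, hm, hf⟩ := ih
    refine ⟨m + 1, fun i => if i ≤ m then f i else c, by simp [h0], by simp, fun i hi => ?_⟩
    rcases Nat.lt_succ_iff_lt_or_eq.1 hi with hi | rfl
    · simpa [hi.le, Nat.succ_le_of_lt hi] using hf i hi
    · simpa [hm] using hbc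

theorem Set.injOn_of_compl_singleton_subset_image {α β : Type*} [Finite β] {f : α → β}
    {s : Set α} {b : β} (hs : s.Finite) (hcard : s.ncard + 1 ≤ Nat.card β)
    (himg : {b}ᶜ ⊆ f '' s) : InjOn f s := by
  have hcompl : ({b}ᶜ : Set β).ncard + 1 = Nat.card β := by
    rw [← ncard_singleton b, ncard_compl_add_ncard]
  have himg_le : ({b}ᶜ : Set β).ncard ≤ (f '' s).ncard := ncard_le_ncard himg (hs.image f)
  exact injOn_of_ncard_image_eq (le_antisymm (ncard_image_le hs) (by omega)) hs

variable {V C : Type*} {G : SimpleGraph V}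

def IsProperOn (G : SimpleGraph V) (S : Set V) (α : V → C) : Prop :=
  ∀ ⦃u v : V⦄, u ∈ S → v ∈ S → G.Adj u v → α u ≠ α v

theorem isProperOn_univ {α : V → C} : IsProperOn G univ α ↔ IsProperColoring G α :=
  ⟨fun h _ _ huv => h trivial trivial huv, fun h _ _ _ _ huv => h huv⟩

theorem IsProperOn.mono {S T : Set V} {α : V → C} (h : IsProperOn G T α) (hST : S ⊆ T) :
    IsProperOn G S α :=
  fun _ _ hu hv huv => h (hST hu) (hST hv) huv

namespace InKempeChainOn

variable {S T : Set V} {α α' : V → C} {a b : C} {v w u : V}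

theorem mem (h : InKempeChainOn G S α a b v u) (hv : v ∈ S) : u ∈ S := by
  induction h with
  | refl => exact hv
  | tail _ hxy _ => exact hxy.2.2.1

theorem color_mem (h : InKempeChainOn G S α a b v u) (hv : α v = a ∨ α v = b) :
    α u = a ∨ α u = b := by
  induction h with
  | refl => exact hv
  | tail _ hxy _ => exact hxy.2.2.2.2

theorem mono (hST : S ⊆ T) (h : InKempeChainOn G S α a b v u) : InKempeChainOn G T α a b v u :=
  Relation.ReflTransGen.mono (fun _ _ ⟨hadj, hx, hy, hcx, hcy⟩ => ⟨hadj, hST hx, hST hy, hcx, hcy⟩)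
    _ _ h

theorem congr (hαα' : EqOn α α' S) (h : InKempeChainOn G S α a b v u) :
    InKempeChainOn G S α' a b v u :=
  Relation.ReflTransGen.mono (fun _ _ ⟨hadj, hx, hy, hcx, hcy⟩ =>
    ⟨hadj, hx, hy, hαα' hx ▸ hcx, hαα' hy ▸ hcy⟩) _ _ h

theorem eq_of_forall_adj (hnb : ∀ u ∈ S, G.Adj v u → ¬(α u = a ∨ α u = b))
    (h : InKempeChainOn G S α a b v u) : u = v := by
  induction h with
  | refl => rfl
  | tail _ hxy ih =>
    subst ih
    exact absurd hxy.2.2.2.2 (hnb _ hxy.2.2.1 hxy.1)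

theorem sdiff_singleton (hv : ¬InKempeChainOn G S α a b w v)
    (h : InKempeChainOn G S α a b w u) : InKempeChainOn G (S \ {v}) α a b w u := by
  induction h with
  | refl => exact .refl
  | @tail x y hwx hxy ih =>
    have hx : x ≠ v := fun hxv => hv (hxv ▸ hwx)
    have hy : y ≠ v := fun hyv => hv (hyv ▸ hwx.tail hxy)
    exact ih.tail ⟨hxy.1, ⟨hxy.2.1, hx⟩, ⟨hxy.2.2.1, hy⟩, hxy.2.2.2⟩

theorem eq_or_sdiff_singleton (hα : IsProperOn G S α) (hvS : v ∈ S)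
    (hvc : α v = a ∨ α v = b) (hinj : InjOn α (S ∩ G.neighborSet v)) (hw : w ∈ S \ {v})
    (h : InKempeChainOn G S α a b w u) : u = v ∨ InKempeChainOn G (S \ {v}) α a b w u := by
  suffices (u = v ∧ ∃ x, InKempeChainOn G (S \ {v}) α a b w x ∧ G.Adj x v ∧
      (α x = a ∨ α x = b)) ∨ InKempeChainOn G (S \ {v}) α a b w u by tauto
  induction h with
  | refl => exact .inr .refl
  | @tail x y _ hxy ih =>
    rcases ih with ⟨rfl, x', hwx', hx'x, hx'c⟩ | hwx
    · have hx'S : x' ∈ S := (hwx'.mem hw).1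
      have hyx : α y ≠ α x := hα hxy.2.2.1 hvS hxy.1.symm
      have hx'c' : α x' ≠ α x := hα hx'S hvS hx'x
      have hyx' : α y = α x' := by
        rcases hvc with h | h <;> rcases hxy.2.2.2.2 with h' | h' <;>
          rcases hx'c with h'' | h'' <;> simp_all
      have : y = x' := hinj ⟨hxy.2.2.1, hxy.1⟩ ⟨hx'S, hx'x.symm⟩ hyx'
      exact .inr (this ▸ hwx')
    · by_cases hyv : y = v
      · exact .inl ⟨hyv, x, hwx, hyv ▸ hxy.1, hxy.2.2.2.1⟩
      · exact .inr (hwx.tail ⟨hxy.1, ⟨hxy.2.1, (hwx.mem hw).2⟩, ⟨hxy.2.2.1, hyv⟩, hxy.2.2.2⟩)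

end InKempeChainOn

variable [DecidableEq C]

open Classical in
noncomputable def kempeSwap (G : SimpleGraph V) (S : Set V) (α : V → C) (a b : C) (v : V) :
    V → C :=
  fun u => if InKempeChainOn G S α a b v u then Equiv.swap a b (α u) else α u

def KempeStepOn (G : SimpleGraph V) (S : Set V) (α β : V → C) : Prop :=
  ∃ (a b : C) (v : V), v ∈ S ∧ (α v = a ∨ α v = b) ∧ β = kempeSwap G S α a b v

abbrev KempeReachOn (G : SimpleGraph V) (S : Set V) : (V → C) → (V → C) → Prop :=
  Relation.ReflTransGen (KempeStepOn G S)

section kempeSwap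

variable {S : Set V} {α σ : V → C} {a b : C} {v w u : V}

theorem kempeSwap_of_mem (h : InKempeChainOn G S α a b v u) :
    kempeSwap G S α a b v u = Equiv.swap a b (α u) := by
  simp [kempeSwap, h]

theorem kempeSwap_of_not_mem (h : ¬InKempeChainOn G S α a b v u) :
    kempeSwap G S α a b v u = α u := by
  simp [kempeSwap, h]

theorem kempeSwap_eqOn_compl (hv : v ∈ S) : EqOn (kempeSwap G S α a b v) α Sᶜ :=
  fun _ hu => kempeSwap_of_not_mem fun h => hu (h.mem hv)

theorem IsProperOn.kempeSwap (hα : IsProperOn G S α) (hv : α v = a ∨ α v = b) :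
    IsProperOn G S (kempeSwap G S α a b v) := by
  have across : ∀ ⦃u₁ u₂⦄, u₁ ∈ S → u₂ ∈ S → G.Adj u₁ u₂ → InKempeChainOn G S α a b v u₁ →
      ¬InKempeChainOn G S α a b v u₂ → Equiv.swap a b (α u₁) ≠ α u₂ := by
    intro u₁ u₂ h₁ h₂ hadj c₁ c₂
    have hc₁ := c₁.color_mem hv
    have hc₂ : ¬(α u₂ = a ∨ α u₂ = b) := fun hc₂ => c₂ (c₁.tail ⟨hadj, h₁, h₂, hc₁, hc₂⟩)
    rcases hc₁ with h | h <;> simp only [h, Equiv.swap_apply_left, Equiv.swap_apply_right] <;>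
      tauto
  intro u₁ u₂ h₁ h₂ hadj
  by_cases c₁ : InKempeChainOn G S α a b v u₁ <;> by_cases c₂ : InKempeChainOn G S α a b v u₂
  · rw [kempeSwap_of_mem c₁, kempeSwap_of_mem c₂]
    exact fun h => hα h₁ h₂ hadj ((Equiv.swap a b).injective h)
  · rw [kempeSwap_of_mem c₁, kempeSwap_of_not_mem c₂]
    exact across h₁ h₂ hadj c₁ c₂
  · rw [kempeSwap_of_not_mem c₁, kempeSwap_of_mem c₂]
    exact (across h₂ h₁ hadj.symm c₂ c₁).symm
  · rw [kempeSwap_of_not_mem c₁, kempeSwap_of_not_mem c₂]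
    exact hα h₁ h₂ hadj

theorem kempeSwap_eqOn_sdiff_singleton (hασ : EqOn α σ (S \ {v}))
    (hchain : ∀ u, InKempeChainOn G S α a b w u → u = v ∨ InKempeChainOn G (S \ {v}) α a b w u) :
    EqOn (kempeSwap G S α a b w) (kempeSwap G (S \ {v}) σ a b w) (S \ {v}) := by
  intro u hu
  have hiff : InKempeChainOn G S α a b w u ↔ InKempeChainOn G (S \ {v}) σ a b w u :=
    ⟨fun h => ((hchain u h).resolve_left hu.2).congr hασ,
      fun h => (h.congr hασ.symm).mono sdiff_subset⟩
  unfold kempeSwap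
  rw [hασ hu]
  classical
  exact if_congr hiff rfl rfl

end kempeSwap

section KempeStepOn

variable {S : Set V} {α β : V → C} {v : V} {e : C}

theorem KempeStepOn.isProperOn (h : KempeStepOn G S α β) (hα : IsProperOn G S α) :
    IsProperOn G S β := by
  obtain ⟨a, b, v, -, hv, rfl⟩ := h
  exact hα.kempeSwap hv

theorem KempeStepOn.eqOn_compl (h : KempeStepOn G S α β) : EqOn β α Sᶜ := by
  obtain ⟨a, b, v, hvS, -, rfl⟩ := h
  exact kempeSwap_eqOn_compl hvS

theorem KempeStepOn.kempeStep (h : KempeStepOn G univ α β) : KempeStep G α β := by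
  obtain ⟨a, b, v, -, hv, rfl⟩ := h
  exact ⟨a, b, v, hv, fun _ h => kempeSwap_of_mem h, fun _ h => kempeSwap_of_not_mem h⟩

theorem kempeStepOn_update [DecidableEq V] (hα : IsProperOn G S α) (hvS : v ∈ S)
    (he : ∀ u ∈ S, G.Adj v u → α u ≠ e) : KempeStepOn G S α (update α v e) := by
  refine ⟨α v, e, v, hvS, .inl rfl, funext fun u => ?_⟩
  have hchain : InKempeChainOn G S α (α v) e v u ↔ u = v := by
    refine ⟨InKempeChainOn.eq_of_forall_adj fun u hu hvu hc => ?_, fun h => h ▸ .refl⟩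
    exact hc.elim (hα hvS hu hvu).symm (he u hu hvu)
  by_cases huv : u = v
  · subst huv
    simp [kempeSwap, hchain]
  · simp [kempeSwap, hchain, huv]

theorem KempeReachOn.isProperOn (h : KempeReachOn G S α β) (hα : IsProperOn G S α) :
    IsProperOn G S β := by
  induction h with
  | refl => exact hα
  | tail _ hstep ih => exact hstep.isProperOn ih

theorem KempeReachOn.eqOn_compl (h : KempeReachOn G S α β) : EqOn β α Sᶜ := by
  induction h with
  | refl => exact eqOn_refl _ _
  | tail _ hstep ih => exact hstep.eqOn_compl.trans ih

theorem KempeReachOn.exists_kempeEquivIn (h : KempeReachOn G univ α β)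
    (hα : IsProperColoring G α) : ∃ N, KempeEquivIn G (IsProperColoring G) N α β := by
  obtain ⟨m, f, h0, hm, hf⟩ := h.exists_seq
  have hproper : ∀ i ≤ m, IsProperOn G univ (f i) := by
    intro i
    induction i with
    | zero => exact fun _ => h0 ▸ isProperOn_univ.2 hα
    | succ i ih => exact fun hi => (hf i (by omega)).isProperOn (ih (by omega))
  exact ⟨m, m, f, le_rfl, h0, hm, fun i hi => isProperOn_univ.1 (hproper i hi),
    fun i hi => (hf i hi).kempeStep⟩

end KempeStepOn

section Lift

variable [Finite V] [Finite C] {d : ℕ} {S : Set V} {c σ σ' : V → C} {a b : C} {v w : V}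

theorem injOn_neighborSet_of_forall_exists_color (hk : d + 1 ≤ Nat.card C)
    (hdeg : (S ∩ G.neighborSet v).ncard ≤ d) (hc : IsProperOn G S c) (hvS : v ∈ S)
    (hwv : w ≠ v) (hv : InKempeChainOn G S c a b w v)
    (hcol : ∀ e, e ≠ a → e ≠ b → ∃ u ∈ S ∩ G.neighborSet v, c u = e) :
    InjOn c (S ∩ G.neighborSet v) := by
  obtain ⟨x, -, hadj, hxS, -, hxc, hvc⟩ : ∃ x, InKempeChainOn G S c a b w x ∧ G.Adj x v ∧
      x ∈ S ∧ v ∈ S ∧ (c x = a ∨ c x = b) ∧ (c v = a ∨ c v = b) := by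
    rcases Relation.ReflTransGen.cases_tail hv with h | h
    · exact absurd h.symm hwv
    · exact h
  have hxv : c x ≠ c v := hc hxS hvS hadj
  refine injOn_of_compl_singleton_subset_image (b := c v) (toFinite _) (by omega) fun e he => ?_
  by_cases hab : e = a ∨ e = b
  · have hex : c x = e := by
      have : e ≠ c v := he
      grind
    exact ⟨x, ⟨hxS, hadj.symm⟩, hex⟩
  · exact hcol e (fun h => hab (.inl h)) (fun h => hab (.inr h))

theorem KempeStepOn.exists_lift [DecidableEq V] (hk : d + 1 ≤ Nat.card C) (hvS : v ∈ S)
    (hdeg : (S ∩ G.neighborSet v).ncard ≤ d) (hc : IsProperOn G S c)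
    (hcσ : EqOn c σ (S \ {v})) (hstep : KempeStepOn G (S \ {v}) σ σ') :
    ∃ c', KempeReachOn G S c c' ∧ EqOn c' σ' (S \ {v}) := by
  obtain ⟨a, b, w, hw, hwσ, rfl⟩ := hstep
  have swap_of_not_mem : ∀ c₁ : V → C, EqOn c₁ σ (S \ {v}) → (c₁ w = a ∨ c₁ w = b) →
      ¬InKempeChainOn G S c₁ a b w v → ∃ c', KempeStepOn G S c₁ c' ∧
        EqOn c' (kempeSwap G (S \ {v}) σ a b w) (S \ {v}) :=
    fun c₁ hc₁σ hwc₁ hv => ⟨_, ⟨a, b, w, hw.1, hwc₁, rfl⟩,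
      kempeSwap_eqOn_sdiff_singleton hc₁σ fun _ h => .inr (h.sdiff_singleton hv)⟩
  have hwc : c w = a ∨ c w = b := hcσ hw ▸ hwσ
  by_cases hv : InKempeChainOn G S c a b w v
  swap
  · obtain ⟨c', hstep, hc'⟩ := swap_of_not_mem c hcσ hwc hv
    exact ⟨c', .single hstep, hc'⟩
  by_cases hfree : ∃ e, e ≠ a ∧ e ≠ b ∧ ∀ u ∈ S, G.Adj v u → c u ≠ e
  · obtain ⟨e, hea, heb, he⟩ := hfree
    have hc₁σ : EqOn (update c v e) σ (S \ {v}) := fun u hu => by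
      rw [update_of_ne hu.2, hcσ hu]
    have hv₁ : ¬InKempeChainOn G S (update c v e) a b w v := fun h => by
      have := h.color_mem (by rwa [update_of_ne hw.2])
      simp only [update_self] at this
      tauto
    obtain ⟨c', hstep, hc'⟩ := swap_of_not_mem _ hc₁σ (by rwa [update_of_ne hw.2]) hv₁
    exact ⟨c', .tail (.single (kempeStepOn_update hc hvS he)) hstep, hc'⟩
  · push Not at hfree
    have hinj := injOn_neighborSet_of_forall_exists_color hk hdeg hc hvS hw.2 hv
      fun e hea heb => by
        obtain ⟨u, hu, hvu, hue⟩ := hfree e hea heb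
        exact ⟨u, ⟨hu, hvu⟩, hue⟩
    exact ⟨_, .single ⟨a, b, w, hw.1, hwc, rfl⟩, kempeSwap_eqOn_sdiff_singleton hcσ
      fun _ h => h.eq_or_sdiff_singleton hc hvS (hv.color_mem hwc) hinj hw⟩

theorem KempeReachOn.exists_lift [DecidableEq V] (hk : d + 1 ≤ Nat.card C) (hvS : v ∈ S)
    (hdeg : (S ∩ G.neighborSet v).ncard ≤ d) (hc : IsProperOn G S c)
    (hcσ : EqOn c σ (S \ {v})) (hreach : KempeReachOn G (S \ {v}) σ σ') :
    ∃ c', KempeReachOn G S c c' ∧ EqOn c' σ' (S \ {v}) := by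
  induction hreach with
  | refl => exact ⟨c, .refl, hcσ⟩
  | tail _ hstep ih =>
    obtain ⟨c', hcc', hc'⟩ := ih
    obtain ⟨c'', hc'c'', hc''⟩ := hstep.exists_lift hk hvS hdeg (hcc'.isProperOn hc) hc'
    exact ⟨c'', hcc'.trans hc'c'', hc''⟩

theorem kempeReachOn_of_eqOn_compl [DecidableEq V] (hk : d + 1 ≤ Nat.card C)
    (hdeg : ∀ s : Set V, s.Nonempty → ∃ v ∈ s, (s ∩ G.neighborSet v).ncard ≤ d)
    (S : Set V) {α β : V → C} (hα : IsProperOn G S α) (hβ : IsProperOn G S β)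
    (hαβ : EqOn α β Sᶜ) : KempeReachOn G S α β := by
  induction S using WellFoundedLT.induction generalizing α β with
  | _ S ih =>
  rcases S.eq_empty_or_nonempty with rfl | hne
  · obtain rfl : α = β := funext fun u => hαβ (notMem_empty u)
    exact .refl
  obtain ⟨v, hvS, hv⟩ := hdeg S hne
  set β' := update β v (α v)
  have hβ'β : EqOn β' β (S \ {v}) := fun u hu => update_of_ne hu.2 _ _
  have hαβ' : EqOn α β' (S \ {v})ᶜ := fun u hu => by
    by_cases huv : u = v
    · simp [β', huv]
    · simp only [β', update_of_ne huv]
      exact hαβ fun huS => hu ⟨huS, huv⟩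
  have hreach := ih (S \ {v}) (sdiff_singleton_ssubset.2 hvS) (hα.mono sdiff_subset)
    (fun u₁ u₂ h₁ h₂ hadj => hβ'β h₁ ▸ hβ'β h₂ ▸ hβ h₁.1 h₂.1 hadj) hαβ'
  obtain ⟨c, hαc, hcβ'⟩ := hreach.exists_lift hk hvS hv hα (eqOn_refl α _)
  have hcβ : update c v (β v) = β := funext fun u => by
    by_cases huv : u = v
    · simp [huv]
    by_cases huS : u ∈ S
    · rw [update_of_ne huv, hcβ' ⟨huS, huv⟩, hβ'β ⟨huS, huv⟩]
    · rw [update_of_ne huv, hαc.eqOn_compl huS, hαβ huS]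
  have hc := hαc.isProperOn hα
  refine hαc.tail (hcβ ▸ kempeStepOn_update hc hvS fun u huS hvu => ?_)
  have huv : u ≠ v := hvu.ne.symm
  rw [hcβ' ⟨huS, huv⟩, hβ'β ⟨huS, huv⟩]
  exact hβ huS hvS hvu.symm

end Lift

theorem statement_3_general (n d k : ℕ) (hk : d + 1 ≤ k) (G : SimpleGraph (Fin n))
    (hdeg : ∀ s : Set (Fin n), s.Nonempty → ∃ v ∈ s, (s ∩ G.neighborSet v).ncard ≤ d)
    (α β : Fin n → Fin k) (hα : IsProperColoring G α) (hβ : IsProperColoring G β) :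
    ∃ N : ℕ, KempeEquivIn G (IsProperColoring G) N α β :=
  (kempeReachOn_of_eqOn_compl (by simpa using hk) hdeg univ (isProperOn_univ.2 hα)
    (isProperOn_univ.2 hβ) (by simp)).exists_kempeEquivIn hα

theorem statement_3 (n d k : ℕ) (hd : 1 ≤ d) (hk : d + 1 ≤ k) (G : SimpleGraph (Fin n))
    (hdeg : ∀ s : Set (Fin n), s.Nonempty → ∃ v ∈ s, (s ∩ G.neighborSet v).ncard ≤ d)
    (α β : Fin n → Fin k) (hα : IsProperColoring G α) (hβ : IsProperColoring G β) :
    ∃ N : ℕ, KempeEquivIn G (IsProperColoring G) N α β :=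
  statement_3_general n d k hk G hdeg α β hα hβ
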